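/- For every nonnegative integer n, C_{n+1} = \sum_{k=0}^{n} (binom(n,k)*binom(n+2,k+1) - binom(n+1,k+1)*binom(n+1,k)). -/
import Mathlib

open Finset

lemma sym2 (n k : ℕ) (hk : k ≤ n) : (n + 2).choose (n + 1 - k) = (n + 2).choose (k + 1) := by
  have h : n + 1 - k = (n + 2) - (k + 1) := by omega
  rw [h, Nat.choose_symm (by omega)]

lemma sym1 (n k : ℕ) (hk : k ≤ n) : (n + 1).choose (n - k) = (n + 1).choose (k + 1) := by
  have h : n - k = (n + 1) - (k + 1) := by omega
  rw [h, Nat.choose_symm (by omega)]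

lemma sumA (n : ℕ) : ∑ k ∈ range (n + 1), n.choose k * (n+2).choose (k+1)
    = (2*n+2).choose (n+1) := by
  have h : (2*n+2) = n + (n+2) := by ring
  rw [h, Nat.add_choose_eq, Finset.Nat.sum_antidiagonal_eq_sum_range_succ_mk]
  simp only [Nat.succ_eq_add_one]
  rw [Finset.sum_range_succ (f := fun i => n.choose i * (n + 2).choose (n + 1 - i))]
  simp only [Nat.choose_succ_self, zero_mul, add_zero]
  refine (Finset.sum_congr rfl fun k hk => ?_).symm
  simp only [Finset.mem_range] at hk
  rw [sym2 n k (by omega)]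

lemma sumB (n : ℕ) : ∑ k ∈ range (n + 1), (n+1).choose (k+1) * (n+1).choose k
    = (2*n+2).choose n := by
  have h : (2*n+2) = (n+1) + (n+1) := by ring
  rw [h, Nat.add_choose_eq, Finset.Nat.sum_antidiagonal_eq_sum_range_succ_mk]
  refine (Finset.sum_congr rfl fun k hk => ?_).symm
  simp only [Finset.mem_range] at hk
  rw [mul_comm, sym1 n k (by omega)]

theorem stmt_1 (n : ℕ) :
    (catalan (n + 1) : ℤ) =
      ∑ k ∈ Finset.range (n + 1),
        ((n.choose k : ℤ) * ((n + 2).choose (k + 1)) -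
          ((n + 1).choose (k + 1)) * ((n + 1).choose k)) := by
  rw [Finset.sum_sub_distrib]
  have e1 : (∑ k ∈ range (n+1), (n.choose k : ℤ) * ((n + 2).choose (k + 1)))
      = ((2*n+2).choose (n+1) : ℤ) := by exact_mod_cast congrArg (Nat.cast : ℕ → ℤ) (sumA n)
  have e2 : (∑ k ∈ range (n+1), ((n+1).choose (k+1) : ℤ) * ((n + 1).choose k))
      = ((2*n+2).choose n : ℤ) := by exact_mod_cast congrArg (Nat.cast : ℕ → ℤ) (sumB n)
  rw [e1, e2]
  have hc : (n + 2) * catalan (n+1) = (n+1).centralBinom :=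
    succ_mul_catalan_eq_centralBinom (n+1)
  have hcb : (n+1).centralBinom = (2*n+2).choose (n+1) := by
    rw [Nat.centralBinom_eq_two_mul_choose, show 2*(n+1)=2*n+2 from by ring]
  have hrel := Nat.choose_succ_right_eq (2*n+2) n
  have hsub : (2*n+2) - n = n + 2 := by omega
  rw [hsub] at hrel
  have h2 : ((2*n+2).choose (n+1) : ℤ) * ((n:ℤ)+1) = ((2*n+2).choose n : ℤ) * ((n:ℤ)+2) := by
    exact_mod_cast hrel
  have h3 : ((n:ℤ) + 2) * (catalan (n+1) : ℤ) = ((2*n+2).choose (n+1) : ℤ) := by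
    exact_mod_cast congrArg (Nat.cast : ℕ → ℤ) (hc.trans hcb)
  have hne : ((n:ℤ) + 2) ≠ 0 := by positivity
  have key : ((n:ℤ)+2) * (catalan (n+1) : ℤ)
      = ((n:ℤ)+2) * (((2*n+2).choose (n+1) : ℤ) - ((2*n+2).choose n : ℤ)) := by
    rw [h3]; nlinarith [h2, h3]
  exact mul_left_cancel₀ hne key
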